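/- If M = Σ_{i=0}^n m_i P_i^n(Φ, Φ^⊥) with m_i ∈ ℝ, then the partial transpose satisfies M^{T_{B⊗n}} = Σ_{k=0}^n t_k P_k^n(P₊, P₋) with t_k = Σ_{i=0}^n x_{i,k} m_i, where x_{i,k} = d^{−n} Σ_{m=max(0,i+k−n)}^{min(i,k)} binom(k,m) binom(n−k,i−m) (−1)^{i−m} (d−1)^{k−m} (d+1)^{n−k+m−i}; in particular the eigenvalues of M^{T_{B⊗n}} are among {t_k}. -/

import Mathlib

/-!
Partial transposition acts factorwise, so it sends `P_i^n(Φ, Φ^⊥)` to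
`P_i^n(Φ^{T_B}, (Φ^⊥)^{T_B})`, and both factors are combinations of `P₊` and `P₋`. Expanding
the tensor products multilinearly, the coefficient of a product with `k` factors `P₊` collects
one weight per position from every pattern with `i` factors `Φ^{T_B}`; grouping these patterns
by the number `m` of positions where both carry the first factor gives
`binom(k, m) binom(n - k, i - m)` equal terms, which is the formula for `x_{i,k}`.
Since `P₊` and `P₋ = 1 - P₊` are complementary projections, the `P_k^n(P₊, P₋)` are orthogonal
projections summing to `1`: some `P_k^n` does not annihilate a given eigenvector `v`, and
comparing `P_k^n M^{T_B} v = t_k P_k^n v` with `c P_k^n v` gives `c = t_k`.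
-/

open Matrix BigOperators Finset
open scoped ComplexOrder

noncomputable section

/-- Partial transpose on the second tensor factor. -/
def ptB {a b : Type*} (M : Matrix (a × b) (a × b) ℂ) : Matrix (a × b) (a × b) ℂ :=
  fun x y => M (x.1, y.2) (y.1, x.2)

/-- Trace norm of a matrix: `tr √(Mᴴ M)`. -/
def traceNorm {ι : Type*} [Fintype ι] [DecidableEq ι] (M : Matrix ι ι ℂ) : ℝ :=
  ((((Matrix.posSemidef_conjTranspose_mul_self M).1.eigenvectorUnitary : Matrix ι ι ℂ) *
      Matrix.diagonal (fun i =>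
        (Real.sqrt ((Matrix.posSemidef_conjTranspose_mul_self M).1.eigenvalues i) : ℂ)) *
      (star ((Matrix.posSemidef_conjTranspose_mul_self M).1.eigenvectorUnitary :
        Matrix ι ι ℂ))).trace).re

/-- Matrix logarithm (base 2) of a Hermitian matrix, taken on its support. -/
def mlog {ι : Type*} [Fintype ι] [DecidableEq ι] (M : Matrix ι ι ℂ) : Matrix ι ι ℂ :=
  if hM : M.IsHermitian then
    (hM.eigenvectorUnitary : Matrix ι ι ℂ) *
      Matrix.diagonal (fun i => (Real.logb 2 (hM.eigenvalues i) : ℂ)) *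
      (star (hM.eigenvectorUnitary : Matrix ι ι ℂ))
  else 0

/-- Quantum relative entropy `D(ρ‖σ) = tr ρ (log ρ − log σ)` (base-2 logs on support). -/
def Drel {ι : Type*} [Fintype ι] [DecidableEq ι] (ρ σ : Matrix ι ι ℂ) : ℝ :=
  ((ρ * (mlog ρ - mlog σ)).trace).re

/-- Quantum information variance `V(ρ‖σ) = tr ρ (log ρ − log σ)² − D(ρ‖σ)²`. -/
def Vrel {ι : Type*} [Fintype ι] [DecidableEq ι] (ρ σ : Matrix ι ι ℂ) : ℝ :=
  ((ρ * ((mlog ρ - mlog σ) * (mlog ρ - mlog σ))).trace).re - (Drel ρ σ) ^ 2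

/-- Von Neumann entropy `S(ρ) = −tr ρ log ρ` (base 2). -/
def Sent {ι : Type*} [Fintype ι] [DecidableEq ι] (ρ : Matrix ι ι ℂ) : ℝ :=
  -((ρ * mlog ρ).trace).re

/-- Maximally entangled state `Φ(d) = (1/d) ∑ |ii⟩⟨jj|`. -/
def Phi (d : ℕ) : Matrix (Fin d × Fin d) (Fin d × Fin d) ℂ :=
  fun x y => if x.1 = x.2 ∧ y.1 = y.2 then (1 / d : ℂ) else 0

/-- Swap operator on `C^d ⊗ C^d`. -/
def swapOp (d : ℕ) : Matrix (Fin d × Fin d) (Fin d × Fin d) ℂ :=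
  fun x y => if x.1 = y.2 ∧ x.2 = y.1 then 1 else 0

/-- Projection onto the symmetric subspace. -/
def Psym (d : ℕ) : Matrix (Fin d × Fin d) (Fin d × Fin d) ℂ :=
  (1 / 2 : ℂ) • (1 + swapOp d)

/-- Projection onto the antisymmetric subspace. -/
def Pasym (d : ℕ) : Matrix (Fin d × Fin d) (Fin d × Fin d) ℂ :=
  (1 / 2 : ℂ) • (1 - swapOp d)

end

/-- n-fold tensor (Kronecker) product of a family of matrices. -/
noncomputable def tpow {ι : Type*} [Fintype ι] (n : ℕ) (f : Fin n → Matrix ι ι ℂ) :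
    Matrix (Fin n → ι) (Fin n → ι) ℂ :=
  fun x y => ∏ j, f j (x j) (y j)

/-- `P_i^n(X,Y)`: the sum of all n-fold tensor products with exactly `i` factors `X`
and `n − i` factors `Y`. -/
noncomputable def Pfam {ι : Type*} [Fintype ι] (n i : ℕ) (X Y : Matrix ι ι ℂ) :
    Matrix (Fin n → ι) (Fin n → ι) ℂ :=
  ∑ s ∈ Finset.univ.filter
      (fun s : Fin n → Bool => (Finset.univ.filter fun j => s j = true).card = i),
    tpow n (fun j => if s j then X else Y)

/-- Factorwise partial transpose (on each second factor) of an operator on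
the n-fold tensor power of `C^d ⊗ C^d`. -/
noncomputable def ptBn {a b : Type*} (n : ℕ)
    (M : Matrix (Fin n → a × b) (Fin n → a × b) ℂ) :
    Matrix (Fin n → a × b) (Fin n → a × b) ℂ :=
  fun x y => M (fun j => ((x j).1, (y j).2)) (fun j => ((y j).1, (x j).2))

/-- The coefficients `x_{i,k}`. -/
noncomputable def xcoef (d n i k : ℕ) : ℝ :=
  (1 / (d : ℝ) ^ n) *
    ∑ m ∈ Finset.Icc (i + k - n) (min i k),
      (k.choose m : ℝ) * ((n - k).choose (i - m) : ℝ) * (-1 : ℝ) ^ (i - m) *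
        ((d : ℝ) - 1) ^ (k - m) * ((d : ℝ) + 1) ^ (n - k + m - i)

section TensorPower

variable {ι : Type*} [Fintype ι] {n : ℕ}

theorem tpow_mul (f g : Fin n → Matrix ι ι ℂ) :
    tpow n f * tpow n g = tpow n (fun j => f j * g j) := by
  ext x y
  simp only [tpow, mul_apply, ← prod_mul_distrib]
  exact (Fintype.prod_sum (fun j w => f j (x j) w * g j w (y j))).symm

theorem tpow_one [DecidableEq ι] : tpow n (fun _ => (1 : Matrix ι ι ℂ)) = 1 := by
  ext x y
  by_cases h : x = y
  · subst h; simp [tpow]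
  · obtain ⟨j, hj⟩ := Function.ne_iff.mp h
    rw [one_apply_ne h]
    exact prod_eq_zero (mem_univ j) (one_apply_ne hj)

theorem tpow_eq_zero {f : Fin n → Matrix ι ι ℂ} (j : Fin n) (hj : f j = 0) : tpow n f = 0 := by
  ext x y
  exact prod_eq_zero (mem_univ j) (by simp [hj])

theorem tpow_smul (c : Fin n → ℂ) (f : Fin n → Matrix ι ι ℂ) :
    tpow n (fun j => c j • f j) = (∏ j, c j) • tpow n f := by
  ext x y
  simp [tpow, prod_mul_distrib]

theorem tpow_sum {κ : Type*} [Fintype κ] (f : Fin n → κ → Matrix ι ι ℂ) :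
    tpow n (fun j => ∑ c, f j c) = ∑ t : Fin n → κ, tpow n (fun j => f j (t j)) := by
  ext x y
  simp [tpow, Matrix.sum_apply, prod_univ_sum]

end TensorPower

def boolSlice (n k : ℕ) : Finset (Fin n → Bool) :=
  univ.filter fun s => (univ.filter fun j => s j = true).card = k

theorem sum_boolSlice {M : Type*} [AddCommMonoid M] (n : ℕ) (g : (Fin n → Bool) → M) :
    ∑ k ∈ range (n + 1), ∑ t ∈ boolSlice n k, g t = ∑ t, g t :=
  sum_fiberwise_of_maps_to (fun _ _ => mem_range_succ_iff.mpr
    ((card_filter_le _ _).trans (card_fin n).le)) g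

section Pfam

variable {ι : Type*} [Fintype ι] {n : ℕ}

theorem Pfam_eq_sum_boolSlice (i : ℕ) (X Y : Matrix ι ι ℂ) :
    Pfam n i X Y = ∑ s ∈ boolSlice n i, tpow n (fun j => if s j then X else Y) := rfl

theorem sum_Pfam (X Y : Matrix ι ι ℂ) :
    ∑ k ∈ range (n + 1), Pfam n k X Y = tpow n (fun _ => X + Y) := by
  have hXY : X + Y = ∑ b : Bool, if b then X else Y := by simp
  simp only [Pfam_eq_sum_boolSlice, sum_boolSlice, hXY, tpow_sum]

theorem tpow_ite_mul_tpow_ite [DecidableEq ι] {P : Matrix ι ι ℂ} (hP : IsIdempotentElem P)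
    (s t : Fin n → Bool) :
    tpow n (fun j => if s j then P else 1 - P) * tpow n (fun j => if t j then P else 1 - P) =
      if s = t then tpow n (fun j => if s j then P else 1 - P) else 0 := by
  rw [tpow_mul]
  split_ifs with hst
  · subst hst
    congr! 2 with j
    split_ifs
    exacts [hP.eq, hP.one_sub.eq]
  · obtain ⟨j, hj⟩ := Function.ne_iff.mp hst
    refine tpow_eq_zero j ?_
    cases hs : s j <;> cases ht : t j <;> simp_all [hP.mul_one_sub_self, hP.one_sub_mul_self]

theorem Pfam_mul_Pfam [DecidableEq ι] {P : Matrix ι ι ℂ} (hP : IsIdempotentElem P) (k l : ℕ) :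
    Pfam n k P (1 - P) * Pfam n l P (1 - P) = if k = l then Pfam n k P (1 - P) else 0 := by
  simp only [Pfam_eq_sum_boolSlice, sum_mul_sum, tpow_ite_mul_tpow_ite hP, sum_ite_eq]
  split_ifs with hkl
  · subst hkl
    exact sum_congr rfl fun s hs => if_pos hs
  · refine sum_eq_zero fun s hs => if_neg fun hs' => hkl ?_
    simp only [boolSlice, mem_filter] at hs hs'
    exact hs.2.symm.trans hs'.2

theorem sum_Pfam_one_sub [DecidableEq ι] (P : Matrix ι ι ℂ) :
    ∑ k ∈ range (n + 1), Pfam n k P (1 - P) = 1 := by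
  simp only [sum_Pfam, add_sub_cancel, tpow_one]

end Pfam

/-- `w b c` is the weight of `A` (`c = true`) or `B` (`c = false`) in `X` (`b = true`) or
`Y` (`b = false`); then `pfamCoeff w n i k` is the coefficient of `Pfam n k A B` in
`Pfam n i X Y`. -/
def pfamCoeff {R : Type*} [CommSemiring R] (w : Bool → Bool → R) (n i k : ℕ) : R :=
  ∑ m ∈ Icc (i + k - n) (min i k), ((k.choose m * (n - k).choose (i - m) : ℕ) : R) *
    (w true true ^ m * w true false ^ (i - m) * w false true ^ (k - m) *
      w false false ^ (n - k - (i - m)))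

section Counting

variable {α : Type*} [Fintype α] [DecidableEq α]

theorem card_filter_card_inter_eq (T : Finset α) {i m : ℕ} (hm : m ≤ i) :
    ((powersetCard i univ).filter fun S => (S ∩ T).card = m).card =
      T.card.choose m * Tᶜ.card.choose (i - m) := by
  rw [← card_powersetCard, ← card_powersetCard, ← card_product]
  have split : ∀ {A B : Finset α}, A ⊆ T → B ⊆ Tᶜ → (A ∪ B) ∩ T = A ∧ (A ∪ B) \ T = B := by
    intro A B hA hB
    have hBT : Disjoint B T := subset_compl_iff_disjoint_right.mp hB
    rw [union_inter_distrib_right, union_sdiff_distrib, inter_eq_left.mpr hA,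
      disjoint_iff_inter_eq_empty.mp hBT, sdiff_eq_empty_iff_subset.mpr hA,
      sdiff_eq_self_of_disjoint hBT]
    simp
  refine card_nbij' (fun S => (S ∩ T, S \ T)) (fun p => p.1 ∪ p.2) ?_ ?_ ?_ ?_
  · intro S hS
    simp only [coe_filter, mem_powersetCard_univ, Set.mem_ofPred_eq] at hS
    have := card_inter_add_card_sdiff S T
    simp only [coe_product, Set.mem_prod, mem_coe, mem_powersetCard, inter_subset_right, hS.2,
      subset_compl_iff_disjoint_right, sdiff_disjoint, true_and]
    omega
  · rintro ⟨A, B⟩ hAB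
    simp only [coe_product, Set.mem_prod, mem_coe, mem_powersetCard] at hAB
    obtain ⟨⟨hA, hAcard⟩, hB, hBcard⟩ := hAB
    have hdisj : Disjoint A B :=
      disjoint_of_subset_left hA (subset_compl_iff_disjoint_right.mp hB).symm
    simp only [coe_filter, mem_powersetCard_univ, Set.mem_ofPred_eq,
      card_union_of_disjoint hdisj, hAcard, hBcard, (split hA hB).1, and_true]
    omega
  · intro S _
    exact sup_inf_sdiff S T
  · rintro ⟨A, B⟩ hAB
    simp only [coe_product, Set.mem_prod, mem_coe, mem_powersetCard] at hAB
    simp [split hAB.1.1 hAB.2.1]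

theorem prod_decide_mem {R : Type*} [CommMonoid R] (w : Bool → Bool → R) (S T : Finset α) :
    ∏ j, w (decide (j ∈ S)) (decide (j ∈ T)) =
      w true true ^ (S ∩ T).card * w true false ^ (S \ T).card *
        w false true ^ (T \ S).card * w false false ^ (S ∪ T)ᶜ.card := by
  set p : α → Bool × Bool := fun j => (decide (j ∈ S), decide (j ∈ T))
  have fiber : ∀ b c, ∏ j ∈ univ.filter (fun j => p j = (b, c)), w (p j).1 (p j).2 =
      w b c ^ (univ.filter fun j => p j = (b, c)).card := fun b c =>
    prod_eq_pow_card fun j hj => by rw [(mem_filter.mp hj).2]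
  change ∏ j, w (p j).1 (p j).2 = _
  rw [← prod_fiberwise univ p, Fintype.prod_prod_type]
  simp only [Fintype.prod_bool, fiber, ← mul_assoc]
  have card_fiber : ∀ b c (U : Finset α),
      (∀ j, j ∈ U ↔ decide (j ∈ S) = b ∧ decide (j ∈ T) = c) →
      (univ.filter fun j => p j = (b, c)).card = U.card := by
    intro b c U hU
    congr 1
    ext j
    simp [p, hU]
  rw [card_fiber true true (S ∩ T) (by simp), card_fiber true false (S \ T) (by simp),
    card_fiber false true (T \ S) (by simp [and_comm]), card_fiber false false (S ∪ T)ᶜ (by simp)]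

theorem sum_powersetCard_prod_decide {R : Type*} [CommSemiring R] (w : Bool → Bool → R)
    (T : Finset α) (i : ℕ) :
    ∑ S ∈ powersetCard i univ, ∏ j, w (decide (j ∈ S)) (decide (j ∈ T)) =
      pfamCoeff w (Fintype.card α) i T.card := by
  have hT := T.card_le_univ
  have maps : ∀ S ∈ powersetCard i univ,
      (S ∩ T).card ∈ Icc (i + T.card - Fintype.card α) (min i T.card) := by
    intro S hS
    rw [mem_powersetCard_univ] at hS
    have := card_union_add_card_inter S T
    have := (S ∪ T).card_le_univ
    have : (S ∩ T).card ≤ S.card := card_le_card inter_subset_left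
    have : (S ∩ T).card ≤ T.card := card_le_card inter_subset_right
    simp only [mem_Icc]
    omega
  rw [← sum_fiberwise_of_maps_to maps]
  refine sum_congr rfl fun m hm => ?_
  have hmi : m ≤ i := (mem_Icc.mp hm).2.trans (min_le_left _ _)
  have on_fiber : ∀ S ∈ (powersetCard i univ).filter fun S => (S ∩ T).card = m,
      ∏ j, w (decide (j ∈ S)) (decide (j ∈ T)) =
        w true true ^ m * w true false ^ (i - m) * w false true ^ (T.card - m) *
          w false false ^ (Fintype.card α - T.card - (i - m)) := by
    intro S hS
    obtain ⟨hS, hSm⟩ := mem_filter.mp hS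
    rw [mem_powersetCard_univ] at hS
    have := card_inter_add_card_sdiff S T
    have hTS := card_inter_add_card_sdiff T S
    rw [inter_comm T S] at hTS
    have := card_union_add_card_inter S T
    have := (S ∪ T).card_le_univ
    rw [prod_decide_mem, card_compl, hSm, show (S \ T).card = i - m by omega,
      show (T \ S).card = T.card - m by omega,
      show Fintype.card α - (S ∪ T).card = Fintype.card α - T.card - (i - m) by omega]
  rw [sum_congr rfl on_fiber, sum_const, card_filter_card_inter_eq T hmi,
    card_compl, nsmul_eq_mul]

end Counting

theorem sum_boolSlice_prod {R : Type*} [CommSemiring R] (w : Bool → Bool → R) {n k : ℕ}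
    {t : Fin n → Bool} (ht : t ∈ boolSlice n k) (i : ℕ) :
    ∑ s ∈ boolSlice n i, ∏ j, w (s j) (t j) = pfamCoeff w n i k := by
  set T := univ.filter fun j => t j = true
  have hT : T.card = k := (mem_filter.mp ht).2
  calc ∑ s ∈ boolSlice n i, ∏ j, w (s j) (t j)
      = ∑ S ∈ powersetCard i univ, ∏ j, w (decide (j ∈ S)) (decide (j ∈ T)) := by
        refine sum_nbij' (fun s => univ.filter fun j => s j = true)
          (fun S j => decide (j ∈ S)) ?_ ?_ ?_ ?_ ?_ <;> intro s hs
        all_goals simp_all [boolSlice, T]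
    _ = pfamCoeff w n i k := by rw [sum_powersetCard_prod_decide, Fintype.card_fin, hT]

theorem Pfam_eq_sum_pfamCoeff_smul {ι : Type*} [Fintype ι] {n : ℕ} {X Y A B : Matrix ι ι ℂ}
    (w : Bool → Bool → ℂ) (hX : X = w true true • A + w true false • B)
    (hY : Y = w false true • A + w false false • B) (i : ℕ) :
    Pfam n i X Y = ∑ k ∈ range (n + 1), pfamCoeff w n i k • Pfam n k A B := by
  have hXY : ∀ b : Bool, (if b then X else Y) = ∑ c : Bool, w b c • if c then A else B := by
    intro b
    cases b <;> simp [hX, hY]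
  calc Pfam n i X Y
      = ∑ s ∈ boolSlice n i, ∑ t : Fin n → Bool,
          (∏ j, w (s j) (t j)) • tpow n (fun j => if t j then A else B) := by
        simp only [Pfam_eq_sum_boolSlice, hXY, tpow_sum, tpow_smul]
    _ = ∑ t : Fin n → Bool,
          (∑ s ∈ boolSlice n i, ∏ j, w (s j) (t j)) • tpow n (fun j => if t j then A else B) := by
        simp only [sum_smul]
        exact sum_comm
    _ = ∑ k ∈ range (n + 1), ∑ t ∈ boolSlice n k,
          pfamCoeff w n i k • tpow n (fun j => if t j then A else B) := by
        rw [← sum_boolSlice]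
        exact sum_congr rfl fun k _ => sum_congr rfl fun t ht => by
          rw [sum_boolSlice_prod w ht]
    _ = ∑ k ∈ range (n + 1), pfamCoeff w n i k • Pfam n k A B := by
        simp only [Pfam_eq_sum_boolSlice, smul_sum]

theorem exists_eq_of_mulVec_eq_smul {K ι κ : Type*} [Field K] [Fintype ι] [DecidableEq ι]
    [DecidableEq κ] {s : Finset κ} {P : κ → Matrix ι ι K} (hsum : ∑ k ∈ s, P k = 1)
    (hmul : ∀ k ∈ s, ∀ l ∈ s, P k * P l = if k = l then P k else 0) (c : κ → K) {μ : K}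
    {v : ι → K} (hv : v ≠ 0) (hμ : (∑ k ∈ s, c k • P k) *ᵥ v = μ • v) : ∃ k ∈ s, μ = c k := by
  obtain ⟨k, hk, hPk⟩ : ∃ k ∈ s, P k *ᵥ v ≠ 0 := by
    by_contra! h
    exact hv (by rw [← one_mulVec v, ← hsum, sum_mulVec, sum_eq_zero h])
  have hPk_mul : P k * ∑ l ∈ s, c l • P l = c k • P k := by
    rw [mul_sum, sum_eq_single_of_mem k hk fun l hl hlk => by
      rw [Matrix.mul_smul, hmul k hk l hl, if_neg hlk.symm, smul_zero]]
    rw [Matrix.mul_smul, hmul k hk k hk, if_pos rfl]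
  refine ⟨k, hk, smul_left_injective K hPk ?_⟩
  have := congrArg (P k *ᵥ ·) hμ
  simpa only [mulVec_mulVec, hPk_mul, smul_mulVec, mulVec_smul] using this.symm

section PartialTranspose

variable {a b : Type*}

theorem ptBn_sum {κ : Type*} (n : ℕ) (s : Finset κ)
    (M : κ → Matrix (Fin n → a × b) (Fin n → a × b) ℂ) :
    ptBn n (∑ k ∈ s, M k) = ∑ k ∈ s, ptBn n (M k) := by
  ext x y
  simp [ptBn, Matrix.sum_apply]

theorem ptBn_smul (n : ℕ) (c : ℂ) (M : Matrix (Fin n → a × b) (Fin n → a × b) ℂ) :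
    ptBn n (c • M) = c • ptBn n M := rfl

theorem ptBn_Pfam [Fintype a] [Fintype b] (n i : ℕ) (X Y : Matrix (a × b) (a × b) ℂ) :
    ptBn n (Pfam n i X Y) = Pfam n i (ptB X) (ptB Y) := by
  rw [Pfam_eq_sum_boolSlice, Pfam_eq_sum_boolSlice, ptBn_sum]
  refine sum_congr rfl fun s _ => ?_
  change tpow n (fun j => ptB (if s j then X else Y)) = _
  exact congrArg (tpow n) (funext fun j => by split_ifs <;> rfl)

theorem ptB_one [DecidableEq a] [DecidableEq b] : ptB (1 : Matrix (a × b) (a × b) ℂ) = 1 := by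
  ext x y
  simp only [ptB, one_apply, Prod.ext_iff]
  exact if_congr (and_congr_right' eq_comm) rfl rfl

end PartialTranspose

theorem swapOp_eq_Psym_sub_Pasym (d : ℕ) : swapOp d = Psym d - Pasym d := by
  rw [Psym, Pasym, ← smul_sub]
  module

theorem Pasym_eq_one_sub_Psym (d : ℕ) : Pasym d = 1 - Psym d := by
  rw [Psym, Pasym]
  module

theorem swapOp_mul_swapOp (d : ℕ) : swapOp d * swapOp d = 1 := by
  ext x y
  rw [mul_apply, sum_eq_single (x.2, x.1)]
  · simp only [swapOp, and_self, if_true, one_mul, one_apply, Prod.ext_iff]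
    exact if_congr and_comm rfl rfl
  · intro z _ hz
    rw [mul_eq_zero]
    simp only [swapOp, ite_eq_right_iff, one_ne_zero, imp_false]
    by_contra! h
    exact hz (Prod.ext h.1.2.symm h.1.1.symm)
  · simp

theorem isIdempotentElem_Psym (d : ℕ) : IsIdempotentElem (Psym d) := by
  simp only [IsIdempotentElem, Psym, Matrix.smul_mul, Matrix.mul_smul, add_mul,
    mul_add, one_mul, mul_one, swapOp_mul_swapOp]
  module

theorem ptB_Phi (d : ℕ) :
    ptB (Phi d) = (1 / d : ℂ) • Psym d + (-(1 / d) : ℂ) • Pasym d := by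
  have : ptB (Phi d) = (1 / d : ℂ) • swapOp d := by
    ext x y
    simp only [ptB, Phi, swapOp, Matrix.smul_apply, smul_eq_mul, mul_ite, mul_one, mul_zero]
    exact if_congr (and_congr_right' eq_comm) rfl rfl
  rw [this, swapOp_eq_Psym_sub_Pasym]
  module

theorem ptB_one_sub_Phi (d : ℕ) :
    ptB (1 - Phi d) = (1 - 1 / d : ℂ) • Psym d + (1 + 1 / d : ℂ) • Pasym d := by
  have hsub : ptB (1 - Phi d) = ptB 1 - ptB (Phi d) := rfl
  rw [hsub, ptB_one, ptB_Phi, Pasym_eq_one_sub_Psym]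
  module

/-- The coordinates of `ptB (Phi d)` (`true`) and `ptB (1 - Phi d)` (`false`) in the basis
`Psym d` (`true`), `Pasym d` (`false`). -/
noncomputable def ptBPhiWeight (d : ℕ) : Bool → Bool → ℂ
  | true, true => 1 / d
  | true, false => -(1 / d)
  | false, true => 1 - 1 / d
  | false, false => 1 + 1 / d

theorem pfamCoeff_ptBPhiWeight {d : ℕ} (hd : d ≠ 0) (n i k : ℕ) :
    pfamCoeff (ptBPhiWeight d) n i k = (xcoef d n i k : ℂ) := by
  have hd' : (d : ℂ) ≠ 0 := Nat.cast_ne_zero.mpr hd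
  rw [pfamCoeff, xcoef]
  push_cast
  rw [mul_sum]
  refine sum_congr rfl fun m hm => ?_
  obtain ⟨hlo, hhi⟩ := mem_Icc.mp hm
  have hmi : m ≤ i := hhi.trans (min_le_left _ _)
  have hmk : m ≤ k := hhi.trans (min_le_right _ _)
  obtain ⟨p, rfl⟩ := Nat.exists_eq_add_of_le hmk
  obtain ⟨q, rfl⟩ := Nat.exists_eq_add_of_le hmi
  obtain ⟨r, rfl⟩ : ∃ r, n = m + p + q + r := ⟨n - (m + p + q), by omega⟩
  have e₁ : m + p + q + r - (m + p) = q + r := by omega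
  have e₂ : q + r + m - (m + q) = r := by omega
  have hsub : 1 - 1 / (d : ℂ) = (d - 1) * (d : ℂ)⁻¹ := by field_simp
  have hadd : 1 + 1 / (d : ℂ) = (d + 1) * (d : ℂ)⁻¹ := by field_simp
  simp only [ptBPhiWeight, e₁, e₂, Nat.add_sub_cancel_left]
  rw [hsub, hadd, mul_pow, mul_pow]
  ring

theorem ptBn_sum_smul_Pfam_Phi {d : ℕ} (hd : d ≠ 0) (n : ℕ) (m : ℕ → ℝ) :
    ptBn n (∑ i ∈ range (n + 1), ((m i : ℝ) : ℂ) • Pfam n i (Phi d) (1 - Phi d)) =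
      ∑ k ∈ range (n + 1),
        ((∑ i ∈ range (n + 1), xcoef d n i k * m i : ℝ) : ℂ) • Pfam n k (Psym d) (Pasym d) := by
  simp only [ptBn_sum, ptBn_smul, ptBn_Pfam,
    Pfam_eq_sum_pfamCoeff_smul (ptBPhiWeight d) (ptB_Phi d) (ptB_one_sub_Phi d),
    pfamCoeff_ptBPhiWeight hd, smul_sum, smul_smul]
  rw [sum_comm]
  refine sum_congr rfl fun k _ => ?_
  rw [← sum_smul]
  push_cast
  exact congrArg (· • _) (sum_congr rfl fun i _ => mul_comm _ _)

/-- For `M = ∑ᵢ mᵢ P_i^n(Φ, Φ^⊥)`, the factorwise partial transpose is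
`M^{T_B} = ∑ₖ tₖ P_k^n(P₊, P₋)` with `tₖ = ∑ᵢ x_{i,k} mᵢ`; in particular every
eigenvalue of `M^{T_B}` is among the `tₖ`. -/
theorem ptBn_Pfam_decomposition (d n : ℕ) (hd : 0 < d) (m : ℕ → ℝ) :
    ptBn n (∑ i ∈ Finset.range (n + 1), ((m i : ℝ) : ℂ) • Pfam n i (Phi d) (1 - Phi d))
      = ∑ k ∈ Finset.range (n + 1),
          ((∑ i ∈ Finset.range (n + 1), xcoef d n i k * m i : ℝ) : ℂ) •
            Pfam n k (Psym d) (Pasym d) ∧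
    ∀ (c : ℂ) (v : (Fin n → Fin d × Fin d) → ℂ), v ≠ 0 →
      (ptBn n (∑ i ∈ Finset.range (n + 1),
          ((m i : ℝ) : ℂ) • Pfam n i (Phi d) (1 - Phi d))) *ᵥ v = c • v →
      ∃ k ≤ n, c = ((∑ i ∈ Finset.range (n + 1), xcoef d n i k * m i : ℝ) : ℂ) := by
  have decomposition := ptBn_sum_smul_Pfam_Phi hd.ne' n m
  refine ⟨decomposition, fun c v hv hc => ?_⟩
  rw [decomposition, Pasym_eq_one_sub_Psym] at hc
  obtain ⟨k, hk, rfl⟩ := exists_eq_of_mulVec_eq_smul (sum_Pfam_one_sub (Psym d))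
    (fun k _ l _ => Pfam_mul_Pfam (isIdempotentElem_Psym d) k l) _ hv hc
  exact ⟨k, mem_range_succ_iff.mp hk, rfl⟩
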